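/- The metric space (F_B(ℝ^m)^p, d_p) is complete. -/

import Mathlib

open Metric Set MeasureTheory Filter

noncomputable section

/-- `Em m` is the Euclidean space ℝ^m. -/
abbrev Em (m : ℕ) := EuclideanSpace ℝ (Fin m)

/-- A set is star-shaped if it contains a point `x` such that the segment from `x`
to any point of the set lies in the set. -/
def StarShaped {m : ℕ} (K : Set (Em m)) : Prop :=
  ∃ x ∈ K, ∀ y ∈ K, segment ℝ x y ⊆ K

/-- The kernel of a set: all points seeing the whole set. -/
def kern {m : ℕ} (K : Set (Em m)) : Set (Em m) :=
  {x | x ∈ K ∧ ∀ y ∈ K, segment ℝ x y ⊆ K}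

/-- Kuratowski upper limit of a sequence of sets. -/
def KLimsup {m : ℕ} (C : ℕ → Set (Em m)) : Set (Em m) :=
  ⋂ n : ℕ, closure (⋃ k : ℕ, ⋃ _ : n ≤ k, C k)

/-- Kuratowski lower limit of a sequence of sets. -/
def KLiminf {m : ℕ} (C : ℕ → Set (Em m)) : Set (Em m) :=
  {x | ∃ f : ℕ → Em m, (∀ n, f n ∈ C n) ∧ Tendsto f atTop (nhds x)}

/-- The α-cut of a fuzzy set `u`, for α > 0. -/
def acut {m : ℕ} (u : Em m → ℝ) (a : ℝ) : Set (Em m) := {x | a ≤ u x}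

/-- The support (0-cut) of a fuzzy set. -/
def fsupp {m : ℕ} (u : Em m → ℝ) : Set (Em m) := closure {x | 0 < u x}

/-- Membership in `F_B(ℝ^m)^p`: normal, upper semi-continuous fuzzy sets with
compact α-cuts for α ∈ (0,1] and α ↦ H([u]_α, {0})^p integrable on (0,1]. -/
structure IsFuzzyBp {m : ℕ} (p : ℝ) (u : Em m → ℝ) : Prop where
  mem01 : ∀ x, u x ∈ Icc (0:ℝ) 1
  normal : ∃ x, u x = 1
  usc : UpperSemicontinuous u
  compactCuts : ∀ a ∈ Ioc (0:ℝ) 1, IsCompact (acut u a)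
  lp : IntegrableOn (fun a => hausdorffDist (acut u a) ({0} : Set (Em m)) ^ p)
        (Ioc (0:ℝ) 1)

/-- Membership in `F_B(ℝ^m)`: normal, upper semi-continuous fuzzy sets with
bounded (hence compact closed) support. -/
structure IsFuzzyB {m : ℕ} (u : Em m → ℝ) : Prop where
  mem01 : ∀ x, u x ∈ Icc (0:ℝ) 1
  normal : ∃ x, u x = 1
  usc : UpperSemicontinuous u
  bddSupp : Bornology.IsBounded {x | 0 < u x}

/-- The `d_p` metric on fuzzy sets. -/
def dp {m : ℕ} (p : ℝ) (u v : Em m → ℝ) : ℝ :=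
  (∫ a in Ioc (0:ℝ) 1, hausdorffDist (acut u a) (acut v a) ^ p) ^ (1/p)

/-- `d_p` distance to the crisp origin `0̂`. -/
def dpOrigin {m : ℕ} (p : ℝ) (u : Em m → ℝ) : ℝ :=
  (∫ a in Ioc (0:ℝ) 1, hausdorffDist (acut u a) ({0} : Set (Em m)) ^ p) ^ (1/p)

/-- Uniformly p-mean bounded family. -/
def UPMB {m : ℕ} (p : ℝ) (U : Set (Em m → ℝ)) : Prop :=
  ∃ M : ℝ, ∀ u ∈ U, dpOrigin p u ≤ M

/-- p-mean equi-left-continuous family. -/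
def PMELC {m : ℕ} (p : ℝ) (U : Set (Em m → ℝ)) : Prop :=
  ∀ ε > (0:ℝ), ∃ δ > (0:ℝ), ∀ h : ℝ, 0 ≤ h → h < δ → ∀ u ∈ U,
    (∫ a in Ioc h 1, hausdorffDist (acut u a) (acut u (a - h)) ^ p) ^ (1/p) < ε

/-- Truncation `u^{(a)}` of a fuzzy set at level `a`. -/
def ftrunc {m : ℕ} (u : Em m → ℝ) (a : ℝ) : Em m → ℝ :=
  fun x => if a ≤ u x then u x else 0

/-- The kernel of a fuzzy set: intersection of the kernels of its cuts. -/
def fker {m : ℕ} (u : Em m → ℝ) : Set (Em m) :=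
  ⋂ a ∈ Ioc (0:ℝ) 1, kern (acut u a)

/-- The full cut-family of a fuzzy set, with the 0-cut being the support. -/
def cutF {m : ℕ} (u : Em m → ℝ) (a : ℝ) : Set (Em m) :=
  if a = 0 then fsupp u else acut u a

/-- Conditions (i)–(iv) of the representation theorem for `F_B(ℝ^m)^p`. -/
def GoodFamily {m : ℕ} (p : ℝ) (v : ℝ → Set (Em m)) : Prop :=
  (∀ l ∈ Ioc (0:ℝ) 1, (v l).Nonempty ∧ IsCompact (v l)) ∧
  (∀ l ∈ Ioc (0:ℝ) 1, v l = ⋂ g ∈ Ico (0:ℝ) l, v g) ∧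
  (v 0 = closure (⋃ g ∈ Ioc (0:ℝ) 1, v g)) ∧
  IntegrableOn (fun a => hausdorffDist (v a) ({0} : Set (Em m)) ^ p) (Ioc (0:ℝ) 1)


/-!
Identify a fuzzy set `u` with its cut map `a ↦ [u]_a` from `(0,1]` into the complete metric
space of nonempty compact sets with the Hausdorff metric. The cut map is left-continuous, hence
measurable, and `d_p` is the `L^p` distance between cut maps. A `d_p`-Cauchy sequence has a
subsequence with summable `L^p` distances, so its cuts converge in the Hausdorff metric at almost
every level, to a family `K` that is antitone on the set `G` of those levels, and Fatou's lemma
turns this into `L^p` convergence to `K`. The fuzzy set `v` with `[v]_t = ⋂_{b ∈ G, b < t} K_b`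
lies in `F_B(ℝ^m)^p`, and `[v]_a = K_a` outside a countable set of levels: the distance from a
fixed point to `K_b` is monotone in `b`, so it jumps at countably many `b` only.
-/

open TopologicalSpace
open scoped ENNReal Topology

local notation "μ₁" => volume.restrict (Ioc (0:ℝ) 1)

theorem exists_strictMono_le_geometric {d : ℕ → ℕ → ℝ≥0∞}
    (h : ∀ ε > 0, ∃ N, ∀ j ≥ N, ∀ k ≥ N, d j k ≤ ε) :
    ∃ n : ℕ → ℕ, StrictMono n ∧ ∀ k, d (n k) (n (k + 1)) ≤ 2⁻¹ ^ k := by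
  choose N hN using fun k : ℕ => h (2⁻¹ ^ k) (ENNReal.pow_pos (by simp) k)
  obtain ⟨n, hn, hnN⟩ := extraction_forall_of_eventually' (P := fun k i => N k ≤ i)
    fun k => ⟨N k, fun _ => id⟩
  exact ⟨n, hn, fun k => hN k _ (hnN k) _ ((hnN k).trans (hn k.lt_succ_self).le)⟩

section Hausdorff

variable {α : Type*} [MetricSpace α]

theorem exists_hausdorffDist_iInter_le {ι : Type*} [Nonempty ι] {K : ι → Set α}
    (hdir : Directed (· ⊇ ·) K) (hK : ∀ i, IsCompact (K i)) {ε : ℝ} (hε : 0 < ε) :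
    ∃ i, ∀ s, (⋂ j, K j) ⊆ s → s ⊆ K i → hausdorffDist s (⋂ j, K j) ≤ ε := by
  obtain ⟨i, hi⟩ := exists_subset_nhds_of_isCompact hdir hK
    (U := {x | infDist x (⋂ j, K j) < ε}) fun x hx =>
      ((continuous_infDist_pt _).isOpen_preimage _ isOpen_Iio).mem_nhds <| by
        simp [infDist_zero_of_mem hx, hε]
  refine ⟨i, fun s hLs hsK => hausdorffDist_le_of_infDist hε.le (fun x hx => (hi (hsK hx)).le)
    fun x hx => ?_⟩
  rw [infDist_zero_of_mem (hLs hx)]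
  exact hε.le

namespace TopologicalSpace.NonemptyCompacts

theorem coe_subset_of_tendsto {A B : ℕ → NonemptyCompacts α} {L M : NonemptyCompacts α}
    (hA : Tendsto A atTop (𝓝 L)) (hB : Tendsto B atTop (𝓝 M))
    (hAB : ∀ k, (A k : Set α) ⊆ B k) : (L : Set α) ⊆ M := by
  intro x hx
  have hcont := (lipschitz_infDist_set x).continuous
  have hle : infDist x M ≤ infDist x L :=
    le_of_tendsto_of_tendsto' ((hcont.tendsto M).comp hB) ((hcont.tendsto L).comp hA)
      fun k => infDist_le_infDist_of_subset (hAB k) (A k).nonempty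
  rw [infDist_zero_of_mem hx] at hle
  exact (M.isCompact.isClosed.mem_iff_infDist_zero M.nonempty).2 (le_antisymm hle infDist_nonneg)

theorem mem_of_continuousWithinAt_infDist {G : Set ℝ} {K : ℝ → NonemptyCompacts α}
    {xs : ℕ → α} (hxs : DenseRange xs) {a : ℝ} (ha : a ∈ closure (G ∩ Iio a))
    (hcont : ∀ i, ContinuousWithinAt (fun b => infDist (xs i) (K b : Set α)) G a) {x : α}
    (hx : ∀ b ∈ G, b < a → x ∈ K b) : x ∈ K a := by
  have hxs_le : ∀ i, infDist (xs i) (K a : Set α) ≤ dist (xs i) x := fun i =>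
    ContinuousWithinAt.closure_le ha ((hcont i).mono inter_subset_left) continuousWithinAt_const
      fun b hb => infDist_le_dist_of_mem (hx b hb.1 hb.2)
  refine ((K a).isCompact.isClosed.mem_iff_infDist_zero (K a).nonempty).2
    (le_antisymm (le_of_forall_pos_le_add fun ε hε => ?_) infDist_nonneg)
  obtain ⟨i, hi⟩ := hxs.exists_dist_lt x (half_pos hε)
  have := infDist_le_infDist_add_dist (x := x) (y := xs i) (s := (K a : Set α))
  linarith [hxs_le i, dist_comm x (xs i)]

end TopologicalSpace.NonemptyCompacts

end Hausdorff

theorem aestronglyMeasurable_restrict_of_continuousWithinAt_Iic {β : Type*} [TopologicalSpace β]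
    [PseudoMetrizableSpace β] {f : ℝ → β} {s : Set ℝ} (hs : MeasurableSet s)
    (hf : ∀ a ∈ s, ContinuousWithinAt f (Iic a) a) :
    AEStronglyMeasurable f (volume.restrict s) := by
  set g : ℕ → ℝ → ℝ := fun j a => ⌊a * (j + 1)⌋ / (j + 1)
  have hg_le : ∀ j a, g j a ≤ a := fun j a => by
    simp only [g]; rw [div_le_iff₀ (by positivity)]; exact Int.floor_le _
  have hg_gt : ∀ j a, a - 1 / (j + 1) < g j a := fun j a => by
    simp only [g]; rw [sub_lt_iff_lt_add, ← add_div, lt_div_iff₀ (by positivity)]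
    linarith [Int.lt_floor_add_one (a * (j + 1))]
  have hg_lim : ∀ a, Tendsto (fun j => g j a) atTop (𝓝[≤] a) := fun a =>
    tendsto_nhdsWithin_iff.2 ⟨tendsto_of_tendsto_of_tendsto_of_le_of_le
      (by simpa using
        tendsto_const_nhds.sub (tendsto_one_div_add_atTop_nhds_zero_nat (𝕜 := ℝ)))
      tendsto_const_nhds (fun j => (hg_gt j a).le) (fun j => hg_le j a),
      Eventually.of_forall fun j => hg_le j a⟩
  refine aestronglyMeasurable_of_tendsto_ae atTop (f := fun j a => f (g j a)) (fun j => ?_)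
    ((ae_restrict_iff' hs).2 (Eventually.of_forall fun a ha => (hf a ha).tendsto.comp (hg_lim a)))
  have : (fun a => f (g j a)) = (fun k : ℤ => f ((k : ℝ) / ((j : ℝ) + 1))) ∘
      fun a : ℝ => ⌊a * ((j : ℝ) + 1)⌋ := rfl
  rw [this]
  exact (StronglyMeasurable.of_discrete.comp_measurable
    (Int.measurable_floor.comp (measurable_id.mul_const _))).aestronglyMeasurable

theorem nonempty_inter_Ioo_of_ae_mem {G : Set ℝ} (hG : ∀ᵐ a ∂μ₁, a ∈ G) {s t : ℝ}
    (hst : s < t) (ht : t ∈ Ioc (0:ℝ) 1) : (G ∩ Ioo s t).Nonempty := by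
  have hsub : Ioo (max s 0) t ⊆ Ioc 0 1 := fun b hb =>
    ⟨(le_max_right _ _).trans_lt hb.1, hb.2.le.trans ht.2⟩
  have hpos : μ₁ (Ioo (max s 0) t) ≠ 0 := by
    rw [Measure.restrict_apply measurableSet_Ioo, inter_eq_self_of_subset_left hsub,
      Real.volume_Ioo]
    simpa using max_lt hst ht.1
  obtain ⟨b, hb, hbG⟩ := Measure.exists_mem_of_measure_ne_zero_of_ae hpos (ae_restrict_of_ae hG)
  exact ⟨b, hbG, (le_max_left _ _).trans_lt hb.1, hb.2⟩

theorem MemLp.toReal_eLpNorm_ofReal {α : Type*} [MeasurableSpace α] {μ : Measure α}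
    {f : α → ℝ} {p : ℝ} (hp : 0 < p) (hf : MemLp f (ENNReal.ofReal p) μ) :
    (eLpNorm f (ENNReal.ofReal p) μ).toReal = (∫ a, ‖f a‖ ^ p ∂μ) ^ (1 / p) := by
  rw [hf.eLpNorm_eq_integral_rpow_norm (by simpa using hp) ENNReal.ofReal_ne_top,
    ENNReal.toReal_ofReal hp.le, one_div, ENNReal.toReal_ofReal (by positivity)]

section eLpDist

variable {α β : Type*} [MeasurableSpace α] [PseudoMetricSpace β] {p : ℝ≥0∞}
  {μ : Measure α}

def eLpDist (p : ℝ≥0∞) (μ : Measure α) (F G : α → β) : ℝ≥0∞ :=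
  eLpNorm (fun a => dist (F a) (G a)) p μ

theorem eLpDist_comm (F G : α → β) : eLpDist p μ F G = eLpDist p μ G F := by
  simp only [eLpDist, dist_comm]

theorem eLpDist_triangle (hp : 1 ≤ p) {F G H : α → β} (hF : AEStronglyMeasurable F μ)
    (hG : AEStronglyMeasurable G μ) (hH : AEStronglyMeasurable H μ) :
    eLpDist p μ F H ≤ eLpDist p μ F G + eLpDist p μ G H :=
  (eLpNorm_mono_real fun _ => (Real.norm_of_nonneg dist_nonneg).trans_le
    (dist_triangle _ _ _)).trans (eLpNorm_add_le (hF.dist hG) (hG.dist hH) hp)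

theorem eLpDist_ne_top_of_memLp (hp : 1 ≤ p) {F G : α → β} {c : β}
    (hF : AEStronglyMeasurable F μ) (hG : AEStronglyMeasurable G μ)
    (hFc : MemLp (fun a => dist (F a) c) p μ) (hGc : MemLp (fun a => dist (G a) c) p μ) :
    eLpDist p μ F G ≠ ∞ := by
  refine ((eLpDist_triangle hp hF aestronglyMeasurable_const hG (G := fun _ => c)).trans_lt ?_).ne
  rw [eLpDist_comm (fun _ => c)]
  exact ENNReal.add_lt_top.2 ⟨hFc.2, hGc.2⟩

theorem memLp_dist_const_of_eLpDist_ne_top (hp : 1 ≤ p) {F G : α → β} {c : β}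
    (hF : AEStronglyMeasurable F μ) (hG : AEStronglyMeasurable G μ)
    (hGc : MemLp (fun a => dist (G a) c) p μ) (hFG : eLpDist p μ F G ≠ ∞) :
    MemLp (fun a => dist (F a) c) p μ :=
  ⟨hF.dist aestronglyMeasurable_const,
    (eLpDist_triangle hp hF hG aestronglyMeasurable_const (H := fun _ => c)).trans_lt
      (ENNReal.add_lt_top.2 ⟨hFG.lt_top, hGc.2⟩)⟩

theorem ae_exists_tendsto_of_tsum_eLpDist_ne_top [IsFiniteMeasure μ] [CompleteSpace β]
    (hp : 1 ≤ p) {F : ℕ → α → β} (hF : ∀ k, AEStronglyMeasurable (F k) μ)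
    (hsum : ∑' k, eLpDist p μ (F k) (F (k + 1)) ≠ ∞) :
    ∀ᵐ a ∂μ, ∃ L, Tendsto (fun k => F k a) atTop (𝓝 L) := by
  set g : ℕ → α → ℝ := fun k a => dist (F k a) (F (k + 1) a)
  have hg : ∀ k, AEStronglyMeasurable (g k) μ := fun k => (hF k).dist (hF (k + 1))
  -- `∫ ∑ₖ gₖ = ∑ₖ ‖gₖ‖₁ ≤ μ(univ) ^ (1 - 1/p) * ∑ₖ ‖gₖ‖ₚ < ∞`
  have hexp : 0 ≤ 1 / (1 : ℝ≥0∞).toReal - 1 / p.toReal := by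
    rcases eq_or_ne p ⊤ with rfl | hpt
    · simp
    · simpa using inv_le_one_of_one_le₀ (by simpa using ENNReal.toReal_mono hpt hp)
  have hL1 : ∫⁻ a, ∑' k, ‖g k a‖ₑ ∂μ ≠ ∞ := by
    rw [lintegral_tsum fun k => (hg k).enorm]
    refine ne_top_of_le_ne_top (ENNReal.mul_ne_top hsum (ENNReal.rpow_ne_top_of_nonneg hexp
      (measure_ne_top μ univ))) ?_
    rw [← ENNReal.tsum_mul_right]
    refine ENNReal.tsum_le_tsum fun k => ?_
    rw [← eLpNorm_one_eq_lintegral_enorm]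
    exact eLpNorm_le_eLpNorm_mul_rpow_measure_univ hp (hg k)
  filter_upwards [ae_lt_top' (AEMeasurable.tsum fun k => (hg k).enorm) hL1] with a ha
  exact cauchySeq_tendsto_of_complete (cauchySeq_of_summable_dist (Summable.of_enorm ha.ne))

theorem exists_subseq_ae_tendsto_of_cauchy_eLpDist [IsFiniteMeasure μ] [CompleteSpace β]
    (hp : 1 ≤ p) {F : ℕ → α → β} (hF : ∀ k, AEStronglyMeasurable (F k) μ)
    (hcauchy : ∀ ε > 0, ∃ N, ∀ j ≥ N, ∀ k ≥ N, eLpDist p μ (F j) (F k) ≤ ε) :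
    ∃ n : ℕ → ℕ, StrictMono n ∧
      ∀ᵐ a ∂μ, ∃ L, Tendsto (fun k => F (n k) a) atTop (𝓝 L) := by
  obtain ⟨n, hn, hfast⟩ := exists_strictMono_le_geometric hcauchy
  refine ⟨n, hn, ae_exists_tendsto_of_tsum_eLpDist_ne_top hp (fun k => hF (n k)) ?_⟩
  refine ne_top_of_le_ne_top ?_ (ENNReal.tsum_le_tsum hfast)
  rw [ENNReal.tsum_geometric_two]
  exact ENNReal.ofNat_ne_top

theorem tendsto_eLpDist_of_ae_tendsto {F : ℕ → α → β} {G : α → β}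
    (hF : ∀ k, AEStronglyMeasurable (F k) μ)
    (hcauchy : ∀ ε > 0, ∃ N, ∀ j ≥ N, ∀ k ≥ N, eLpDist p μ (F j) (F k) ≤ ε)
    {n : ℕ → ℕ} (hn : Tendsto n atTop atTop)
    (hlim : ∀ᵐ a ∂μ, Tendsto (fun k => F (n k) a) atTop (𝓝 (G a))) :
    Tendsto (fun j => eLpDist p μ (F j) G) atTop (𝓝 0) := by
  refine ENNReal.tendsto_nhds_zero.2 fun ε hε => ?_
  obtain ⟨N, hN⟩ := hcauchy ε hε
  filter_upwards [eventually_ge_atTop N] with j hj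
  refine Lp.eLpNorm_le_of_ae_tendsto ((hn.eventually_ge_atTop N).mono fun k hk => hN j hj _ hk)
    (fun k => (hF j).dist (hF (n k))) ?_
  filter_upwards [hlim] with a ha
  exact tendsto_const_nhds.dist ha

end eLpDist

section OfCuts

variable {X : Type*} {G : Set ℝ} {K : ℝ → Set X}

/-- The fuzzy set whose `t`-cut is `⋂ b ∈ G, b < t, K b` when `K` is antitone on a set `G` of
levels that is dense from the left in `(0,1]`. -/
def ofCuts (G : Set ℝ) (K : ℝ → Set X) (x : X) : ℝ :=
  sSup (insert 0 {b | b ∈ G ∧ x ∈ K b})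

theorem ofCuts_mem_Icc (hG : G ⊆ Icc 0 1) (x : X) : ofCuts G K x ∈ Icc 0 1 := by
  have hS : ∀ b ∈ insert 0 {b | b ∈ G ∧ x ∈ K b}, b ∈ Icc (0:ℝ) 1 := by
    rintro b (rfl | hb)
    exacts [⟨le_rfl, zero_le_one⟩, hG hb.1]
  exact ⟨le_csSup ⟨1, fun b hb => (hS b hb).2⟩ (mem_insert _ _),
    csSup_le (insert_nonempty _ _) fun b hb => (hS b hb).2⟩

theorem le_ofCuts_iff (hG : G ⊆ Icc 0 1) (hK : AntitoneOn K G)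
    (hdense : ∀ s t, s < t → t ∈ Ioc (0:ℝ) 1 → (G ∩ Ioo s t).Nonempty) {t : ℝ}
    (ht : t ∈ Ioc (0:ℝ) 1) (x : X) :
    t ≤ ofCuts G K x ↔ ∀ b ∈ G, b < t → x ∈ K b := by
  have hbdd : BddAbove (insert 0 {b | b ∈ G ∧ x ∈ K b}) :=
    ⟨1, by rintro b (rfl | hb); exacts [zero_le_one, (hG hb.1).2]⟩
  constructor
  · intro hvt b hb hbt
    obtain ⟨c, hc, hbc⟩ := exists_lt_of_lt_csSup (insert_nonempty _ _) (hbt.trans_le hvt)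
    rcases hc with rfl | hc
    · exact absurd (hG hb).1 hbc.not_ge
    · exact hK hb hc.1 hbc.le hc.2
  · intro hx
    by_contra! hlt
    obtain ⟨b, hbG, hb⟩ := hdense _ _ hlt ht
    exact hb.1.not_ge (le_csSup hbdd (Or.inr ⟨hbG, hx b hbG hb.2⟩))

end OfCuts

section CompactCut

variable {m : ℕ} {p : ℝ} {u w : Em m → ℝ}

theorem acut_antitone (u : Em m → ℝ) : Antitone (acut u) :=
  fun _ _ hab _ hx => le_trans hab hx

theorem iInter_acut_Ioo (u : Em m → ℝ) {a : ℝ} (ha : 0 < a) :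
    ⋂ b : Ioo 0 a, acut u b = acut u a := by
  ext x
  simp only [mem_iInter, acut, mem_ofPred_eq, Subtype.forall, mem_Ioo]
  refine ⟨fun h => le_of_forall_lt_imp_le_of_dense fun b hb => ?_,
    fun h b hb => hb.2.le.trans h⟩
  exact (le_max_left b (a / 2)).trans
    (h _ ⟨lt_max_of_lt_right (half_pos ha), max_lt hb (half_lt_self ha)⟩)

theorem IsFuzzyBp.acut_nonempty (hu : IsFuzzyBp p u) {a : ℝ} (ha : a ≤ 1) :
    (acut u a).Nonempty := by
  obtain ⟨x, hx⟩ := hu.normal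
  exact ⟨x, by simp [acut, hx, ha]⟩

open Classical in
/-- `{0}` is a junk value, taken only where `[u]_a` is not a nonempty compact set (never for
`a ∈ (0,1]` when `u ∈ F_B(ℝ^m)^p`). -/
def compactCut (u : Em m → ℝ) (a : ℝ) : NonemptyCompacts (Em m) :=
  if h : IsCompact (acut u a) ∧ (acut u a).Nonempty then ⟨⟨acut u a, h.1⟩, h.2⟩ else {0}

theorem IsFuzzyBp.coe_compactCut (hu : IsFuzzyBp p u) {a : ℝ} (ha : a ∈ Ioc (0:ℝ) 1) :
    (compactCut u a : Set (Em m)) = acut u a := by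
  rw [compactCut, dif_pos ⟨hu.compactCuts a ha, hu.acut_nonempty ha.2⟩]
  rfl

theorem IsFuzzyBp.ae_acut_eq_compactCut (hu : IsFuzzyBp p u) :
    ∀ᵐ a ∂μ₁, acut u a = compactCut u a :=
  (ae_restrict_mem measurableSet_Ioc).mono fun _ ha => (hu.coe_compactCut ha).symm

theorem IsFuzzyBp.continuousWithinAt_compactCut (hu : IsFuzzyBp p u) {a : ℝ}
    (ha : a ∈ Ioc (0:ℝ) 1) : ContinuousWithinAt (compactCut u) (Iic a) a := by
  have : Nonempty (Ioo 0 a) := ⟨⟨a / 2, half_pos ha.1, half_lt_self ha.1⟩⟩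
  rw [Metric.continuousWithinAt_iff]
  intro ε hε
  obtain ⟨⟨b, hb⟩, hbε⟩ := exists_hausdorffDist_iInter_le
    (K := fun b : Ioo 0 a => acut u b) (Antitone.directed_ge fun b c hbc => acut_antitone u hbc)
    (fun b => hu.compactCuts b ⟨b.2.1, b.2.2.le.trans ha.2⟩) (half_pos hε)
  refine ⟨a - b, sub_pos.2 hb.2, fun c hca hdist => ?_⟩
  have hbc : b < c := by rw [Real.dist_eq, abs_lt] at hdist; linarith
  rw [NonemptyCompacts.dist_eq, hu.coe_compactCut ⟨hb.1.trans hbc, hca.trans ha.2⟩,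
    hu.coe_compactCut ha, ← iInter_acut_Ioo u ha.1] at *
  exact (hbε _ (by rw [iInter_acut_Ioo u ha.1]; exact acut_antitone u hca)
    (acut_antitone u hbc.le)).trans_lt (half_lt_self hε)

theorem IsFuzzyBp.aestronglyMeasurable_compactCut (hu : IsFuzzyBp p u) :
    AEStronglyMeasurable (compactCut u) μ₁ :=
  aestronglyMeasurable_restrict_of_continuousWithinAt_Iic measurableSet_Ioc
    fun _ ha => hu.continuousWithinAt_compactCut ha

theorem memLp_dist_zero_iff_integrableOn (hp : 0 < p) {v : Em m → ℝ}
    {F : ℝ → NonemptyCompacts (Em m)} (hF : AEStronglyMeasurable F μ₁)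
    (hvF : ∀ᵐ a ∂μ₁, acut v a = F a) :
    MemLp (fun a => dist (F a) {0}) (ENNReal.ofReal p) μ₁ ↔
      IntegrableOn (fun a => hausdorffDist (acut v a) ({0} : Set (Em m)) ^ p) (Ioc (0:ℝ) 1) := by
  rw [← integrable_norm_rpow_iff (hF.dist aestronglyMeasurable_const) (by simpa using hp)
    ENNReal.ofReal_ne_top, ENNReal.toReal_ofReal hp.le, IntegrableOn]
  refine integrable_congr ?_
  filter_upwards [hvF] with a ha
  rw [Real.norm_of_nonneg dist_nonneg, NonemptyCompacts.dist_eq, ha,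
    NonemptyCompacts.coe_singleton]

theorem IsFuzzyBp.memLp_dist_compactCut_zero (hp : 0 < p) (hu : IsFuzzyBp p u) :
    MemLp (fun a => dist (compactCut u a) {0}) (ENNReal.ofReal p) μ₁ :=
  (memLp_dist_zero_iff_integrableOn hp hu.aestronglyMeasurable_compactCut
    hu.ae_acut_eq_compactCut).2 hu.lp

theorem IsFuzzyBp.eLpDist_compactCut_ne_top (hp : 1 ≤ p) (hu : IsFuzzyBp p u)
    (hw : IsFuzzyBp p w) :
    eLpDist (ENNReal.ofReal p) μ₁ (compactCut u) (compactCut w) ≠ ∞ :=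
  eLpDist_ne_top_of_memLp (ENNReal.one_le_ofReal.2 hp) hu.aestronglyMeasurable_compactCut
    hw.aestronglyMeasurable_compactCut (hu.memLp_dist_compactCut_zero (by linarith))
    (hw.memLp_dist_compactCut_zero (by linarith))

theorem dp_eq_toReal_eLpDist (hp : 1 ≤ p) (hu : IsFuzzyBp p u)
    {F : ℝ → NonemptyCompacts (Em m)} (hF : AEStronglyMeasurable F μ₁)
    (hwF : ∀ᵐ a ∂μ₁, acut w a = F a)
    (hfin : eLpDist (ENNReal.ofReal p) μ₁ (compactCut u) F ≠ ∞) :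
    dp p u w = (eLpDist (ENNReal.ofReal p) μ₁ (compactCut u) F).toReal := by
  rw [eLpDist, MemLp.toReal_eLpNorm_ofReal (by linarith)
    ⟨hu.aestronglyMeasurable_compactCut.dist hF, hfin.lt_top⟩, dp]
  congr 1
  refine integral_congr_ae ?_
  filter_upwards [hwF, ae_restrict_mem measurableSet_Ioc] with a ha ha'
  rw [Real.norm_of_nonneg dist_nonneg, NonemptyCompacts.dist_eq, hu.coe_compactCut ha', ha]

theorem cauchy_eLpDist_compactCut (hp : 1 ≤ p) {u : ℕ → Em m → ℝ}
    (hu : ∀ n, IsFuzzyBp p (u n))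
    (hcauchy : ∀ ε > (0:ℝ), ∃ N : ℕ, ∀ j ≥ N, ∀ k ≥ N, dp p (u j) (u k) < ε) :
    ∀ ε > 0, ∃ N, ∀ j ≥ N, ∀ k ≥ N,
      eLpDist (ENNReal.ofReal p) μ₁ (compactCut (u j)) (compactCut (u k)) ≤ ε := by
  intro ε hε
  obtain ⟨δ, hδ, hδpos, hδε⟩ := ENNReal.lt_iff_exists_real_btwn.1 hε
  obtain ⟨N, hN⟩ := hcauchy δ (ENNReal.ofReal_pos.1 hδpos)
  refine ⟨N, fun j hj k hk => ?_⟩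
  have hfin := (hu j).eLpDist_compactCut_ne_top hp (hu k)
  have hdp := hN j hj k hk
  rw [dp_eq_toReal_eLpDist hp (hu j) (hu k).aestronglyMeasurable_compactCut
    (hu k).ae_acut_eq_compactCut hfin] at hdp
  exact ((ENNReal.le_ofReal_iff_toReal_le hfin hδ).2 hdp.le).trans hδε.le

theorem antitoneOn_of_tendsto_compactCut {w : ℕ → Em m → ℝ} (hw : ∀ k, IsFuzzyBp p (w k))
    {G : Set ℝ} {K : ℝ → NonemptyCompacts (Em m)} (hG : G ⊆ Ioc 0 1)
    (hlim : ∀ a ∈ G, Tendsto (fun k => compactCut (w k) a) atTop (𝓝 (K a))) :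
    AntitoneOn (fun b => (K b : Set (Em m))) G := fun b hb c hc hbc =>
  NonemptyCompacts.coe_subset_of_tendsto (hlim c hc) (hlim b hb) fun k => by
    rw [(hw k).coe_compactCut (hG hb), (hw k).coe_compactCut (hG hc)]
    exact acut_antitone _ hbc

end CompactCut

section Representation

variable {m : ℕ} {G : Set ℝ} {K : ℝ → NonemptyCompacts (Em m)}

theorem mem_acut_ofCuts_iff (hGsub : G ⊆ Ioc 0 1)
    (hGae : ∀ᵐ a ∂μ₁, a ∈ G)
    (hK : AntitoneOn (fun b => (K b : Set (Em m))) G) {t : ℝ} (ht : t ∈ Ioc (0:ℝ) 1)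
    (x : Em m) :
    x ∈ acut (ofCuts G fun b => (K b : Set (Em m))) t ↔ ∀ b ∈ G, b < t → x ∈ K b :=
  le_ofCuts_iff (hGsub.trans Ioc_subset_Icc_self) hK
    (fun _ _ hst ht => nonempty_inter_Ioo_of_ae_mem hGae hst ht) ht x

theorem isCompact_and_nonempty_acut_ofCuts (hGsub : G ⊆ Ioc 0 1)
    (hGae : ∀ᵐ a ∂μ₁, a ∈ G)
    (hK : AntitoneOn (fun b => (K b : Set (Em m))) G) {t : ℝ} (ht : t ∈ Ioc (0:ℝ) 1) :
    IsCompact (acut (ofCuts G fun b => (K b : Set (Em m))) t) ∧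
      (acut (ofCuts G fun b => (K b : Set (Em m))) t).Nonempty := by
  have hcut : acut (ofCuts G fun b => (K b : Set (Em m))) t =
      ⋂ b : ↥(G ∩ Iio t), (K b : Set (Em m)) := by
    ext x
    simp only [mem_acut_ofCuts_iff hGsub hGae hK ht, mem_iInter, Subtype.forall, mem_inter_iff,
      mem_Iio, and_imp, SetLike.mem_coe]
  obtain ⟨b₀, hb₀G, hb₀⟩ := nonempty_inter_Ioo_of_ae_mem hGae ht.1 ht
  have : Nonempty ↥(G ∩ Iio t) := ⟨⟨b₀, hb₀G, hb₀.2⟩⟩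
  rw [hcut]
  refine ⟨(K b₀).isCompact.of_isClosed_subset
      (isClosed_iInter fun b => (K b).isCompact.isClosed)
      (iInter_subset_of_subset ⟨b₀, hb₀G, hb₀.2⟩ subset_rfl),
    IsCompact.nonempty_iInter_of_directed_nonempty_isCompact_isClosed _ ?_
      (fun b => (K b).nonempty) (fun b => (K b).isCompact) fun b => (K b).isCompact.isClosed⟩
  exact Antitone.directed_ge fun b c hbc => hK b.2.1 c.2.1 hbc

theorem isFuzzyBp_ofCuts {p : ℝ} (hGsub : G ⊆ Ioc 0 1)
    (hGae : ∀ᵐ a ∂μ₁, a ∈ G)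
    (hK : AntitoneOn (fun b => (K b : Set (Em m))) G)
    (hlp : IntegrableOn (fun a => hausdorffDist (acut (ofCuts G fun b => (K b : Set (Em m))) a)
      ({0} : Set (Em m)) ^ p) (Ioc (0:ℝ) 1)) :
    IsFuzzyBp p (ofCuts G fun b => (K b : Set (Em m))) := by
  have hcut := fun t (ht : t ∈ Ioc (0:ℝ) 1) =>
    isCompact_and_nonempty_acut_ofCuts hGsub hGae hK ht
  have hIcc := ofCuts_mem_Icc (K := fun b => (K b : Set (Em m)))
    (hGsub.trans Ioc_subset_Icc_self)
  refine ⟨hIcc, ?_, ?_, fun t ht => (hcut t ht).1, hlp⟩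
  · obtain ⟨x, hx⟩ := (hcut 1 ⟨one_pos, le_rfl⟩).2
    exact ⟨x, le_antisymm (hIcc x).2 hx⟩
  · refine upperSemicontinuous_iff_isClosed_preimage.2 fun y => ?_
    rcases le_or_gt y 0 with hy0 | hy0
    · convert isClosed_univ
      exact eq_univ_of_forall fun x => hy0.trans (hIcc x).1
    rcases le_or_gt y 1 with hy1 | hy1
    · exact (hcut y ⟨hy0, hy1⟩).1.isClosed
    · convert isClosed_empty
      exact eq_empty_of_forall_notMem fun x hx => (hy1.trans_le hx).not_ge (hIcc x).2

theorem ae_acut_ofCuts_eq (hGsub : G ⊆ Ioc 0 1)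
    (hGae : ∀ᵐ a ∂μ₁, a ∈ G)
    (hK : AntitoneOn (fun b => (K b : Set (Em m))) G) :
    ∀ᵐ a ∂μ₁,
      acut (ofCuts G fun b => (K b : Set (Em m))) a = K a := by
  obtain ⟨xs, hxs⟩ := exists_dense_seq (Em m)
  have hmono : ∀ i, MonotoneOn (fun b => infDist (xs i) (K b : Set (Em m))) G :=
    fun i b hb c hc hbc => infDist_le_infDist_of_subset (hK hb hc hbc) (K c).nonempty
  have hcont : ∀ᵐ a ∂μ₁,
      ∀ i, a ∈ G → ContinuousWithinAt (fun b => infDist (xs i) (K b : Set (Em m))) G a := by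
    rw [ae_all_iff]
    intro i
    filter_upwards [((hmono i).countable_not_continuousWithinAt).ae_notMem _] with a ha haG
    exact not_not.1 fun h => ha ⟨haG, h⟩
  filter_upwards [hGae, hcont, ae_restrict_mem measurableSet_Ioc] with a haG hcont ha
  have hclosure : a ∈ closure (G ∩ Iio a) := by
    refine Metric.mem_closure_iff.2 fun ε hε => ?_
    obtain ⟨b, hbG, hb⟩ := nonempty_inter_Ioo_of_ae_mem hGae (sub_lt_self a hε) ha
    refine ⟨b, ⟨hbG, hb.2⟩, ?_⟩
    rw [Real.dist_eq, abs_lt]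
    constructor <;> linarith [hb.1, hb.2]
  ext x
  rw [mem_acut_ofCuts_iff hGsub hGae hK ha]
  exact ⟨fun hx => NonemptyCompacts.mem_of_continuousWithinAt_infDist hxs hclosure
    (fun i => hcont i haG) hx, fun hx b hb hba => hK hb haG hba.le hx⟩

theorem exists_limit_of_ae_tendsto_compactCut {p : ℝ} {w : ℕ → Em m → ℝ}
    (hw : ∀ k, IsFuzzyBp p (w k))
    (hconv : ∀ᵐ a ∂μ₁, ∃ L, Tendsto (fun k => compactCut (w k) a) atTop (𝓝 L)) :
    ∃ (v : Em m → ℝ) (K : ℝ → NonemptyCompacts (Em m)),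
      (∀ᵐ a ∂μ₁, Tendsto (fun k => compactCut (w k) a) atTop (𝓝 (K a))) ∧
      (∀ᵐ a ∂μ₁, acut v a = K a) ∧
      (IntegrableOn (fun a => hausdorffDist (acut v a) ({0} : Set (Em m)) ^ p) (Ioc (0:ℝ) 1) →
        IsFuzzyBp p v) := by
  set K := fun a => limUnder atTop fun k => compactCut (w k) a
  set G := {a ∈ Ioc (0:ℝ) 1 | Tendsto (fun k => compactCut (w k) a) atTop (𝓝 (K a))}
  have hGsub : G ⊆ Ioc 0 1 := sep_subset _ _
  have hGae : ∀ᵐ a ∂μ₁, a ∈ G := by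
    filter_upwards [hconv, ae_restrict_mem measurableSet_Ioc] with a hL ha
    exact ⟨ha, tendsto_nhds_limUnder hL⟩
  have hK := antitoneOn_of_tendsto_compactCut hw hGsub fun _ ha => ha.2
  exact ⟨_, K, hGae.mono fun _ ha => ha.2, ae_acut_ofCuts_eq hGsub hGae hK,
    isFuzzyBp_ofCuts hGsub hGae hK⟩

end Representation

/-- The metric space `(F_B(ℝ^m)^p, d_p)` is complete: every
Cauchy sequence converges to an element of the space. -/
theorem fuzzyBp_complete {m : ℕ} (p : ℝ) (hp : 1 ≤ p)
    (u : ℕ → Em m → ℝ) (hu : ∀ n, IsFuzzyBp p (u n))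
    (hcauchy : ∀ ε > (0:ℝ), ∃ N : ℕ, ∀ j ≥ N, ∀ k ≥ N, dp p (u j) (u k) < ε) :
    ∃ v : Em m → ℝ, IsFuzzyBp p v ∧ Tendsto (fun n => dp p (u n) v) atTop (nhds 0) := by
  have hp' : 1 ≤ ENNReal.ofReal p := ENNReal.one_le_ofReal.2 hp
  have hF := fun n => (hu n).aestronglyMeasurable_compactCut
  have hcauchy' := cauchy_eLpDist_compactCut hp hu hcauchy
  obtain ⟨n, hn, hconv⟩ := exists_subseq_ae_tendsto_of_cauchy_eLpDist hp' hF hcauchy'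
  obtain ⟨v, K, hK, hvK, hv⟩ := exists_limit_of_ae_tendsto_compactCut (fun k => hu (n k)) hconv
  have hKm := aestronglyMeasurable_of_tendsto_ae atTop (fun k => hF (n k)) hK
  have hlim := tendsto_eLpDist_of_ae_tendsto hF hcauchy' hn.tendsto_atTop hK
  have hK0 : MemLp (fun a => dist (K a) {0}) (ENNReal.ofReal p) μ₁ := by
    obtain ⟨j, hj⟩ := (hlim.eventually (gt_mem_nhds ENNReal.zero_lt_top)).exists
    exact memLp_dist_const_of_eLpDist_ne_top hp' hKm (hF j)
      ((hu j).memLp_dist_compactCut_zero (by linarith)) (by rw [eLpDist_comm]; exact hj.ne)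
  have hdp : ∀ j, dp p (u j) v = (eLpDist (ENNReal.ofReal p) μ₁ (compactCut (u j)) K).toReal :=
    fun j => dp_eq_toReal_eLpDist hp (hu j) hKm hvK (eLpDist_ne_top_of_memLp hp' (hF j) hKm
      ((hu j).memLp_dist_compactCut_zero (by linarith)) hK0)
  refine ⟨v, hv ((memLp_dist_zero_iff_integrableOn (by linarith) hKm hvK).1 hK0), ?_⟩
  simp_rw [hdp, ← ENNReal.toReal_zero]
  exact (ENNReal.tendsto_toReal ENNReal.zero_ne_top).comp hlim

end
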